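/- The symplectic Cayley transform Φ(S) = ½ J (S + I)(S - I)⁻¹, defined on Sp₀(n) = {S ∈ Sp(n) : det(S-I) ≠ 0}, is injective, with inverse given by Φ⁻¹(M) = (M - ½J)⁻¹ (M + ½J). -/

import Mathlib

open Matrix

/-- The standard symplectic matrix `J = [[0, I], [-I, 0]]` with `n × n` blocks. -/
def stdJ (n : ℕ) : Matrix (Fin n ⊕ Fin n) (Fin n ⊕ Fin n) ℝ :=
  Matrix.fromBlocks 0 1 (-1) 0

/-- The symplectic Cayley transform `Φ(S) = ½ J (S + I)(S - I)⁻¹`. -/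
noncomputable def sympCayley (n : ℕ) (S : Matrix (Fin n ⊕ Fin n) (Fin n ⊕ Fin n) ℝ) :
    Matrix (Fin n ⊕ Fin n) (Fin n ⊕ Fin n) ℝ :=
  (1 / 2 : ℝ) • (stdJ n * (S + 1) * (S - 1)⁻¹)

/-! Because `(S + 1) - (S - 1) = 2` and `(S + 1) + (S - 1) = 2S`, the Cayley transform satisfies
`Φ(S) - ½J = J (S - 1)⁻¹` and `Φ(S) + ½J = J S (S - 1)⁻¹`. Since `S` commutes with `S - 1`,
`(Φ(S) - ½J)⁻¹ (Φ(S) + ½J) = (S - 1) S (S - 1)⁻¹ = S`, so `S` is recovered from `Φ(S)`. -/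

namespace Matrix

variable {m K : Type*} [Fintype m] [DecidableEq m] [Field K] [NeZero (2 : K)]

noncomputable def cayleyTransform (J S : Matrix m m K) : Matrix m m K :=
  (1 / 2 : K) • (J * (S + 1) * (S - 1)⁻¹)

variable {J S : Matrix m m K}

theorem cayleyTransform_sub_half_smul (hS : IsUnit (S - 1).det) :
    cayleyTransform J S - (1 / 2 : K) • J = J * (S - 1)⁻¹ := by
  calc cayleyTransform J S - (1 / 2 : K) • J
      = (1 / 2 : K) • (J * ((S + 1) - (S - 1)) * (S - 1)⁻¹) := by
        rw [mul_sub, sub_mul, mul_nonsing_inv_cancel_right _ _ hS, smul_sub, cayleyTransform]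
    _ = J * (S - 1)⁻¹ := by
        rw [add_sub_sub_cancel, one_add_one_eq_two, mul_two, add_mul, ← two_smul K, smul_smul,
          one_div_mul_cancel two_ne_zero, one_smul]

theorem cayleyTransform_add_half_smul (hS : IsUnit (S - 1).det) :
    cayleyTransform J S + (1 / 2 : K) • J = J * S * (S - 1)⁻¹ := by
  calc cayleyTransform J S + (1 / 2 : K) • J
      = (1 / 2 : K) • (J * ((S + 1) + (S - 1)) * (S - 1)⁻¹) := by
        rw [mul_add J, add_mul _ (J * (S - 1)), mul_nonsing_inv_cancel_right _ _ hS, smul_add,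
          cayleyTransform]
    _ = J * S * (S - 1)⁻¹ := by
        rw [add_add_sub_cancel, mul_add, add_mul, ← two_smul K, smul_smul,
          one_div_mul_cancel two_ne_zero, one_smul]

theorem isUnit_det_cayleyTransform_sub_half_smul (hJ : IsUnit J.det) (hS : IsUnit (S - 1).det) :
    IsUnit (cayleyTransform J S - (1 / 2 : K) • J).det := by
  rw [cayleyTransform_sub_half_smul hS, det_mul]
  exact hJ.mul (isUnit_nonsing_inv_det _ hS)

theorem cayleyTransform_sub_half_smul_inv_mul_add (hJ : IsUnit J.det) (hS : IsUnit (S - 1).det) :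
    (cayleyTransform J S - (1 / 2 : K) • J)⁻¹ * (cayleyTransform J S + (1 / 2 : K) • J) = S := by
  have hcomm : (S - 1) * S = S * (S - 1) := by noncomm_ring
  rw [cayleyTransform_sub_half_smul hS, cayleyTransform_add_half_smul hS, mul_inv_rev,
    nonsing_inv_nonsing_inv _ hS, mul_assoc, mul_assoc J, nonsing_inv_mul_cancel_left _ _ hJ,
    ← mul_assoc, hcomm, mul_nonsing_inv_cancel_right _ _ hS]

theorem cayleyTransform_injOn (hJ : IsUnit J.det) :
    Set.InjOn (cayleyTransform J) {S : Matrix m m K | IsUnit (S - 1).det} := by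
  intro S hS S' hS' h
  rw [← cayleyTransform_sub_half_smul_inv_mul_add hJ hS,
    ← cayleyTransform_sub_half_smul_inv_mul_add hJ hS', h]

end Matrix

theorem stdJ_mul_stdJ (n : ℕ) : stdJ n * stdJ n = -1 := by
  simp [stdJ, fromBlocks_multiply, ← fromBlocks_one, fromBlocks_neg]

theorem isUnit_det_stdJ (n : ℕ) : IsUnit (stdJ n).det :=
  isUnit_det_of_right_inverse (B := -stdJ n) (by rw [mul_neg, stdJ_mul_stdJ, neg_neg])

theorem sympCayley_eq_cayleyTransform (n : ℕ) : sympCayley n = cayleyTransform (stdJ n) := rfl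

theorem cayley_transform_injective_general (n : ℕ)
    (S : Matrix (Fin n ⊕ Fin n) (Fin n ⊕ Fin n) ℝ)
    (hdet : (S - 1).det ≠ 0) :
    IsUnit (sympCayley n S - (1 / 2 : ℝ) • stdJ n).det ∧
    (sympCayley n S - (1 / 2 : ℝ) • stdJ n)⁻¹ *
        (sympCayley n S + (1 / 2 : ℝ) • stdJ n) = S ∧
    ∀ S' : Matrix (Fin n ⊕ Fin n) (Fin n ⊕ Fin n) ℝ,
      S'ᵀ * stdJ n * S' = stdJ n → (S' - 1).det ≠ 0 →
        sympCayley n S = sympCayley n S' → S = S' := by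
  rw [sympCayley_eq_cayleyTransform]
  exact ⟨isUnit_det_cayleyTransform_sub_half_smul (isUnit_det_stdJ n) hdet.isUnit,
    cayleyTransform_sub_half_smul_inv_mul_add (isUnit_det_stdJ n) hdet.isUnit,
    fun S' _ hdet' => cayleyTransform_injOn (isUnit_det_stdJ n) hdet.isUnit hdet'.isUnit⟩

/-- The symplectic Cayley transform is injective on `Sp₀(n)`, with inverse
`M ↦ (M - ½J)⁻¹ (M + ½J)`. -/
theorem cayley_transform_injective (n : ℕ)
    (S : Matrix (Fin n ⊕ Fin n) (Fin n ⊕ Fin n) ℝ)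
    (hS : Sᵀ * stdJ n * S = stdJ n) (hdet : (S - 1).det ≠ 0) :
    IsUnit (sympCayley n S - (1 / 2 : ℝ) • stdJ n).det ∧
    (sympCayley n S - (1 / 2 : ℝ) • stdJ n)⁻¹ *
        (sympCayley n S + (1 / 2 : ℝ) • stdJ n) = S ∧
    ∀ S' : Matrix (Fin n ⊕ Fin n) (Fin n ⊕ Fin n) ℝ,
      S'ᵀ * stdJ n * S' = stdJ n → (S' - 1).det ≠ 0 →
        sympCayley n S = sympCayley n S' → S = S' :=
  cayley_transform_injective_general n S hdet
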